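/- arXiv:2604.22007 — 2 statements merged into one kernel-verified Lean document; each statement's English description precedes it below -/
import Mathlib

section
/- For n ≥ 3, the cardinalities of Kiselman's semigroups satisfy |K_n| ≡ |K_{n-2}| (mod 2). -/
namespace Kiselman

/-- The defining relations of Kiselman's semigroup on the free monoid over `Fin n`,
where the index `i : Fin n` represents the generator `a_{i+1}` (so letters are 0-based). -/
def Rel (n : ℕ) : FreeMonoid (Fin n) → FreeMonoid (Fin n) → Prop := fun u v =>
  (∃ i : Fin n, u = .of i * .of i ∧ v = .of i) ∨
  (∃ i j : Fin n, j < i ∧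
    ((u = .of i * .of j * .of i ∧ v = .of i * .of j) ∨
     (u = .of j * .of i * .of j ∧ v = .of i * .of j)))

/-- Kiselman's semigroup (monoid) `K n`, presented by the relations `Rel n`. -/
def K (n : ℕ) : Type := (conGen (Rel n)).Quotient

instance (n : ℕ) : Monoid (K n) := inferInstanceAs (Monoid (conGen (Rel n)).Quotient)

/-- The canonical epimorphism `φ` from the free monoid onto `K n`. -/
def phi (n : ℕ) : FreeMonoid (Fin n) →* K n := Con.mk' _

/-- `φ` applied to a word given as a list of (0-based) letters. -/
def phiL (n : ℕ) (w : List (Fin n)) : K n := phi n (FreeMonoid.ofList w)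

/-- The generator `a_{i+1}` of `K n` (`i` is the 0-based index). -/
def gen {n : ℕ} (i : Fin n) : K n := phi n (FreeMonoid.of i)

/-- The word `a_hi a_{hi-1} ⋯ a_lo` (letters named 1-based), as a list of 0-based indices:
`[hi-1, hi-2, …, lo-1]` (capped at `n`). -/
def descList (n lo hi : ℕ) : List (Fin n) :=
  ((List.finRange n).filter (fun k => decide (lo ≤ k.val + 1 ∧ k.val + 1 ≤ hi))).reverse

/-- The zero element `f = a_n a_{n-1} ⋯ a_2 a_1` of `K n`. -/
def fEl (n : ℕ) : K n := phiL n (descList n 1 n)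

/-- A word `w` is canonical if for every factorization `w = p ++ [i] ++ u ++ [i] ++ q`
there are letters `j > i` and `k < i` occurring in `u`. -/
def Canonical {n : ℕ} (w : List (Fin n)) : Prop :=
  ∀ (p u q : List (Fin n)) (i : Fin n),
    w = p ++ [i] ++ u ++ [i] ++ q →
    (∃ j ∈ u, i < j) ∧ (∃ k ∈ u, k < i)

/-- The submonoid of `K n` generated by `{a_2, a_3, …, a_n}`. -/
def upper (n : ℕ) : Submonoid (K n) := Submonoid.closure (gen '' {i : Fin n | i.val ≠ 0})

/-- The submonoid of `K n` generated by `{a_1, a_2, …, a_{n-1}}`. -/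
def lower (n : ℕ) : Submonoid (K n) := Submonoid.closure (gen '' {i : Fin n | i.val + 1 ≠ n})

/-- `m(x) = min { i ∈ {0,…,n} : x ⬝ (a_i a_{i-1} ⋯ a_1) = f }`. -/
noncomputable def mIdx {n : ℕ} (x : K n) : ℕ :=
  sInf {i : ℕ | x * phiL n (descList n 1 i) = fEl n}

variable {n : ℕ}

/-! ### List utilities -/

theorem map_eq_map_mem {α β : Type*} {x y : α → β} :
    ∀ {L : List α}, L.map x = L.map y → ∀ a ∈ L, x a = y a
  | [], _, a, ha => absurd ha (List.not_mem_nil)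
  | b :: L, h, a, ha => by
    simp only [List.map_cons, List.cons.injEq] at h
    rcases List.mem_cons.1 ha with rfl | ha'
    · exact h.1
    · exact map_eq_map_mem h.2 a ha'

theorem exists_last_split {α : Type*} {P : α → Prop} :
    ∀ {w : List α}, (∃ a ∈ w, P a) → ∃ A x B, w = A ++ x :: B ∧ P x ∧ ∀ y ∈ B, ¬ P y
  | [], h => absurd h (by simp)
  | a :: w, h => by
    by_cases hw : ∃ b ∈ w, P b
    · obtain ⟨A, x, B, rfl, hx, hB⟩ := exists_last_split hw
      exact ⟨a :: A, x, B, rfl, hx, hB⟩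
    · push_neg at hw
      rcases h with ⟨b, hb, hPb⟩
      rcases List.mem_cons.1 hb with rfl | hb'
      · exact ⟨[], b, w, rfl, hPb, hw⟩
      · exact absurd hPb (hw b hb')

theorem two_splits {α : Type*} :
    ∀ {A : List α} {w A' B B' : List α} {c : α}, w = A ++ c :: B → w = A' ++ c :: B' →
      c ∉ B' → A = A' ∨ ∃ M, A' = A ++ c :: M ∧ B = M ++ c :: B'
  | [], w, A', B, B', c, h1, h2, hB' => by
    subst h1
    simp only [List.nil_append] at h2 ⊢
    cases A' with
    | nil => exact Or.inl rfl
    | cons a A'' =>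
      simp only [List.cons_append, List.cons.injEq] at h2
      exact Or.inr ⟨A'', by rw [h2.1], h2.2⟩
  | a :: A, w, A', B, B', c, h1, h2, hB' => by
    subst h1
    simp only [List.cons_append] at h2 ⊢
    cases A' with
    | nil =>
      simp only [List.nil_append, List.cons.injEq] at h2
      refine absurd ?_ hB'
      rw [← h2.2]; simp
    | cons a' A'' =>
      simp only [List.cons_append, List.cons.injEq] at h2
      rcases two_splits rfl h2.2 hB' with h | ⟨M, hM1, hM2⟩
      · exact Or.inl (by rw [h2.1, h])
      · exact Or.inr ⟨M, by rw [h2.1, hM1], hM2⟩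

/-! ### The state machine invariant -/

def rec' (x : Fin n → ℕ) (i : Fin n) : ℕ :=
  1 + Encodable.encode (((List.finRange n).filter (fun j => decide (i < j))).map x)

def step (i : Fin n) (x : Fin n → ℕ) : Fin n → ℕ := Function.update x i (rec' x i)

def stF (s : Fin n → ℕ) (w : List (Fin n)) : Fin n → ℕ := w.foldl (fun x i => step i x) s

def st (w : List (Fin n)) : Fin n → ℕ := stF (fun _ => 0) w

theorem rec'_ne_zero (x : Fin n → ℕ) (i : Fin n) : rec' x i ≠ 0 := by
  simp [rec']

theorem rec'_congr {x y : Fin n → ℕ} {i : Fin n} (h : ∀ j, i < j → x j = y j) :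
    rec' x i = rec' y i := by
  unfold rec'
  congr 1
  apply congrArg
  apply List.map_congr_left
  intro a ha
  simp only [List.mem_filter, List.mem_finRange, true_and, decide_eq_true_eq] at ha
  exact h a ha

theorem rec'_inj {x y : Fin n → ℕ} {i : Fin n} (h : rec' x i = rec' y i) :
    ∀ j, i < j → x j = y j := by
  unfold rec' at h
  have h2 := Encodable.encode_injective (Nat.add_left_cancel h)
  intro j hj
  exact map_eq_map_mem h2 j (by simp [hj])

theorem step_apply (i : Fin n) (x : Fin n → ℕ) (j : Fin n) :
    step i x j = if j = i then rec' x i else x j := by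
  simp [step, Function.update_apply]

theorem step_same (i : Fin n) (x : Fin n → ℕ) : step i x i = rec' x i := by simp [step_apply]

theorem step_other {i j : Fin n} (h : j ≠ i) (x : Fin n → ℕ) : step i x j = x j := by
  simp [step_apply, h]

theorem stF_nil (s : Fin n → ℕ) : stF s [] = s := rfl

theorem stF_cons (s : Fin n → ℕ) (a : Fin n) (w : List (Fin n)) :
    stF s (a :: w) = stF (step a s) w := rfl

theorem stF_append (s : Fin n → ℕ) (A B : List (Fin n)) :
    stF s (A ++ B) = stF (stF s A) B := List.foldl_append

theorem stF_notmem {i : Fin n} : ∀ {B : List (Fin n)}, i ∉ B → ∀ s, stF s B i = s i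
  | [], _, s => rfl
  | b :: B, h, s => by
    rw [stF_cons, stF_notmem (fun hc => h (List.mem_cons_of_mem b hc)),
      step_other (fun hc => h (by rw [hc]; exact List.mem_cons_self))]

theorem st_last {w A B : List (Fin n)} {c : Fin n} (hw : w = A ++ c :: B) (hB : c ∉ B) :
    st w c = rec' (st A) c := by
  subst hw
  show stF _ (A ++ c :: B) c = _
  rw [show A ++ c :: B = (A ++ [c]) ++ B by simp, stF_append, stF_notmem hB, stF_append]
  exact step_same c _

theorem st_zero_of_notmem {w : List (Fin n)} {i : Fin n} (h : i ∉ w) : st w i = 0 :=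
  stF_notmem h _

theorem st_ne_zero_of_mem {w : List (Fin n)} {i : Fin n} (h : i ∈ w) : st w i ≠ 0 := by
  obtain ⟨A, x, B, hw, hx, hB⟩ := exists_last_split ⟨i, h, rfl⟩
  subst hx
  rw [st_last hw (fun hc => hB i hc rfl)]
  exact rec'_ne_zero _ _

theorem st_ne_zero_split {w : List (Fin n)} {i : Fin n} (h : st w i ≠ 0) :
    ∃ A B, w = A ++ i :: B ∧ i ∉ B ∧ st w i = rec' (st A) i := by
  by_cases hm : i ∈ w
  · obtain ⟨A, x, B, hw, hx, hB⟩ := exists_last_split ⟨i, hm, rfl⟩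
    subst hx
    have hB' : i ∉ B := fun hc => hB i hc rfl
    exact ⟨A, B, hw, hB', st_last hw hB'⟩
  · exact absurd (st_zero_of_notmem hm) h


/-! ### Step relations -/

theorem rec'_step_le {i j : Fin n} (h : j ≤ i) (x : Fin n → ℕ) :
    rec' (step j x) i = rec' x i :=
  rec'_congr fun k hk => step_other (fun hc => absurd (hc ▸ hk) (not_lt.2 h)) x

theorem step_step (i : Fin n) (x : Fin n → ℕ) : step i (step i x) = step i x := by
  funext t
  rw [step_apply]
  split
  · next ht => subst ht; rw [step_same, rec'_step_le le_rfl]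
  · rfl

theorem rel2a {i j : Fin n} (hji : j < i) (x : Fin n → ℕ) :
    step i (step j (step i x)) = step j (step i x) := by
  funext t
  rw [step_apply]
  split
  · next ht =>
    subst ht
    rw [rec'_step_le hji.le, rec'_step_le le_rfl, step_other hji.ne', step_same]
  · rfl

theorem rel2b {i j : Fin n} (hji : j < i) (x : Fin n → ℕ) :
    step j (step i (step j x)) = step j (step i x) := by
  have hij : i ≠ j := hji.ne'
  funext t
  by_cases htj : t = j
  · subst htj
    rw [step_same, step_same]
    apply rec'_congr
    intro k hk
    by_cases hki : k = i
    · subst hki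
      rw [step_same, step_same, rec'_step_le hji.le]
    · rw [step_other hki, step_other (fun hc : k = t => absurd (hc ▸ hk) (lt_irrefl t)) x,
        step_other hki]
  · rw [step_other htj, step_other htj]
    by_cases hti : t = i
    · subst hti
      rw [step_same, step_same, rec'_step_le hji.le]
    · rw [step_other hti, step_other hti, step_other htj]

/-! ### Congruence compatibility -/

def stCon (n : ℕ) : Con (FreeMonoid (Fin n)) where
  r u v := ∀ s, stF s (FreeMonoid.toList u) = stF s (FreeMonoid.toList v)
  iseqv := ⟨fun _ _ => rfl, fun h s => (h s).symm, fun h1 h2 s => (h1 s).trans (h2 s)⟩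
  mul' := fun {w x y z} h1 h2 s => by
    rw [FreeMonoid.toList_mul, FreeMonoid.toList_mul, stF_append, stF_append, h1, h2]

theorem rel_le_stCon : ∀ u v, Rel n u v → stCon n u v := by
  rintro u v (⟨i, rfl, rfl⟩ | ⟨i, j, hji, (⟨rfl, rfl⟩ | ⟨rfl, rfl⟩)⟩) <;> intro s
  · exact step_step i s
  · exact rel2a hji s
  · exact rel2b hji s

theorem st_eq_of_phiL_eq {w w' : List (Fin n)} (h : phiL n w = phiL n w') : st w = st w' := by
  have hc : conGen (Rel n) (FreeMonoid.ofList w) (FreeMonoid.ofList w') := (Con.eq _).mp h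
  have hle := Con.conGen_le.mpr (rel_le_stCon (n := n))
  have h0 := (Con.le_def.mp hle hc) (fun _ => 0)
  simpa [FreeMonoid.toList_ofList, st] using h0


/-! ### wrappers -/

theorem st_last' {w A B : List (Fin n)} {c : Fin n} (hw : w = A ++ [c] ++ B) (hB : c ∉ B) :
    st w c = rec' (st A) c :=
  st_last (by simpa using hw) hB

/-! ### The Prec relation -/

inductive Prec : Fin n → (Fin n → ℕ) → (Fin n → ℕ) → Prop where
  | zero (i j : Fin n) (x y : Fin n → ℕ) (hij : i < j) (hx : x j = 0) (hy : y j ≠ 0)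
      (hup : ∀ k, j < k → x k = y k) : Prec i x y
  | more (i j : Fin n) (x y x' y' : Fin n → ℕ) (hij : i < j) (hne : x j ≠ y j)
      (hxr : x j = rec' x' j) (hyr : y j = rec' y' j)
      (hup : ∀ k, j < k → x k = y k) (hp : Prec j x' y') : Prec i x y

theorem Prec.ext' : ∀ {i : Fin n} {x y x2 y2 : Fin n → ℕ}, Prec i x y →
    (∀ k, i < k → x2 k = x k) → (∀ k, i < k → y2 k = y k) → Prec i x2 y2 := by
  intro i x y x2 y2 h hx2 hy2
  cases h with
  | zero i j x y hij hx hy hup =>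
    exact Prec.zero i j x2 y2 hij ((hx2 j hij).trans hx) (fun hc => hy ((hy2 j hij).symm.trans hc))
      (fun k hk => by rw [hx2 k (hij.trans hk), hy2 k (hij.trans hk)]; exact hup k hk)
  | more i j x y x' y' hij hne hxr hyr hup hp =>
    exact Prec.more i j x2 y2 x' y' hij
      (by rw [hx2 j hij, hy2 j hij]; exact hne)
      ((hx2 j hij).trans hxr) ((hy2 j hij).trans hyr)
      (fun k hk => by rw [hx2 k (hij.trans hk), hy2 k (hij.trans hk)]; exact hup k hk) hp

theorem max_diff_unique {x y : Fin n → ℕ} {j1 j2 : Fin n}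
    (h1 : x j1 ≠ y j1) (u1 : ∀ k, j1 < k → x k = y k)
    (h2 : x j2 ≠ y j2) (u2 : ∀ k, j2 < k → x k = y k) : j1 = j2 := by
  rcases lt_trichotomy j1 j2 with h | h | h
  · exact absurd (u1 j2 h) h2
  · exact h
  · exact absurd (u2 j1 h) h1

theorem Prec.asymm : ∀ {i : Fin n} {x y : Fin n → ℕ}, Prec i x y → Prec i y x → False := by
  intro i x y h
  induction h with
  | zero i j x y hij hx hy hup =>
    intro h2
    cases h2 with
    | zero i2 j2 y2 x2 hij2 hx2 hy2 hup2 =>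
      have hj : j = j2 := max_diff_unique (x := x) (y := y)
        (by rw [hx]; exact fun hc => hy hc.symm) hup
        (fun hc => hy2 (hc.trans hx2)) (fun k hk => (hup2 k hk).symm)
      subst hj
      exact hy2 hx
    | more i2 j2 y2 x2 x'' y'' hij2 hne2 hxr2 hyr2 hup2 hp2 =>
      have hj : j = j2 := max_diff_unique (x := x) (y := y)
        (by rw [hx]; exact fun hc => hy hc.symm) hup
        (Ne.symm hne2) (fun k hk => (hup2 k hk).symm)
      subst hj
      exact rec'_ne_zero y'' j (hyr2.symm.trans hx)
  | more i j x y x' y' hij hne hxr hyr hup hp ih =>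
    intro h2
    cases h2 with
    | zero i2 j2 y2 x2 hij2 hx2 hy2 hup2 =>
      have hj : j = j2 := max_diff_unique hne hup
        (fun hc => hy2 (hc.trans hx2)) (fun k hk => (hup2 k hk).symm)
      subst hj
      exact rec'_ne_zero y' j (hyr.symm.trans hx2)
    | more i2 j2 y2 x2 x'' y'' hij2 hne2 hxr2 hyr2 hup2 hp2 =>
      have hj : j = j2 := max_diff_unique hne hup (Ne.symm hne2)
        (fun k hk => (hup2 k hk).symm)
      subst hj
      -- x j = rec' x' j = rec' y'' j, y j = rec' y' j = rec' x'' j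
      have e1 : ∀ k, j < k → x' k = y'' k := rec'_inj (hxr.symm.trans hyr2)
      have e2 : ∀ k, j < k → y' k = x'' k := rec'_inj (hyr.symm.trans hxr2)
      exact ih (hp2.ext' (fun k hk => e2 k hk) (fun k hk => e1 k hk))

/-! ### Distinct snapshots (Lemma A) and time ordering (Lemma T) -/

theorem ct_main : ∀ (fuel : ℕ) (i : Fin n), n - i.val ≤ fuel →
    ∀ {w : List (Fin n)}, Canonical w → ∀ {A B C : List (Fin n)},
      w = A ++ [i] ++ B ++ [i] ++ C →
      (∃ k, i < k ∧ st A k ≠ st (A ++ [i] ++ B) k) ∧ Prec i (st A) (st (A ++ [i] ++ B)) := by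
  intro fuel
  induction fuel with
  | zero => intro i hi; exact absurd hi (by have := i.isLt; omega)
  | succ fuel ih =>
    intro i _ w hcan A B C hw
    obtain ⟨hBig, _⟩ := hcan A B C i hw
    -- last position in B with letter > i
    obtain ⟨B1, k, B2, hB, hik, hB2⟩ := exists_last_split hBig
    have hkB2 : k ∉ B2 := fun hc => hB2 k hc hik
    have hrecAB : st (A ++ [i] ++ B) k = rec' (st (A ++ [i] ++ B1)) k := by
      apply st_last' (B := B2)
      · rw [hB]; simp
      · exact hkB2
    have hfuel : n - k.val ≤ fuel := by
      have h1 := k.isLt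
      have h2 : i.val < k.val := hik
      omega
    -- part 1 : st A k ≠ st (A ++ [i] ++ B) k
    have hdiff : st A k ≠ st (A ++ [i] ++ B) k := by
      by_cases hkA : k ∈ A
      · obtain ⟨A1, A2, hA, hkA2, hstA⟩ := st_ne_zero_split (st_ne_zero_of_mem hkA)
        have hw2 : w = A1 ++ [k] ++ (A2 ++ [i] ++ B1) ++ [k] ++ (B2 ++ [i] ++ C) := by
          rw [hw, hA, hB]; simp
        obtain ⟨⟨k2, hk2, hne2⟩, _⟩ := ih k hfuel hcan hw2
        have hQ : A1 ++ [k] ++ (A2 ++ [i] ++ B1) = A ++ [i] ++ B1 := by rw [hA]; simp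
        rw [hQ] at hne2
        intro hceq
        rw [hstA, hrecAB] at hceq
        exact hne2 (rec'_inj hceq k2 hk2)
      · rw [st_zero_of_notmem hkA, hrecAB]
        exact fun hc => rec'_ne_zero _ _ hc.symm
    refine ⟨⟨k, hik, hdiff⟩, ?_⟩
    -- part 2 : Prec
    classical
    set D : Finset (Fin n) := Finset.univ.filter
      (fun j => i < j ∧ st A j ≠ st (A ++ [i] ++ B) j) with hD
    have hkD : k ∈ D := Finset.mem_filter.mpr ⟨Finset.mem_univ _, hik, hdiff⟩
    have hDne : D.Nonempty := ⟨k, hkD⟩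
    set j := D.max' hDne with hj
    have hjD : j ∈ D := D.max'_mem hDne
    have hij : i < j := (Finset.mem_filter.mp hjD).2.1
    have hjne : st A j ≠ st (A ++ [i] ++ B) j := (Finset.mem_filter.mp hjD).2.2
    have hup : ∀ k', j < k' → st A k' = st (A ++ [i] ++ B) k' := by
      intro k' hk'
      by_contra hne'
      have : k' ∈ D := Finset.mem_filter.mpr ⟨Finset.mem_univ _, hij.trans hk', hne'⟩
      exact absurd (D.le_max' k' this) (not_le.mpr hk')
    by_cases hAj : st A j = 0
    · exact Prec.zero i j _ _ hij hAj (fun hc => hjne (hAj.trans hc.symm)) hup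
    · obtain ⟨P1, P2, hP, hjP2, hstP⟩ := st_ne_zero_split hAj
      have hABj : st (A ++ [i] ++ B) j ≠ 0 := by
        apply st_ne_zero_of_mem
        have : j ∈ A := by
          by_contra hc
          exact hAj (st_zero_of_notmem hc)
        simp [this]
      obtain ⟨Q1, Q2, hQ, hjQ2, hstQ⟩ := st_ne_zero_split hABj
      have hsplit := two_splits (A := P1) (w := A ++ [i] ++ B) (c := j)
        (B := P2 ++ [i] ++ B) (A' := Q1) (B' := Q2)
        (by rw [hP]; simp) (by simpa using hQ) hjQ2
      rcases hsplit with heq | ⟨M, hM1, hM2⟩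
      · exact absurd (hstP.trans (heq ▸ hstQ.symm)) hjne
      · have hw3 : w = P1 ++ [j] ++ M ++ [j] ++ (Q2 ++ [i] ++ C) := by
          have : A ++ [i] ++ B = Q1 ++ [j] ++ Q2 := by simpa using hQ
          rw [hw, this, hM1]; simp
        have hfuelj : n - j.val ≤ fuel := by
          have h1 := j.isLt
          have h2 : i.val < j.val := hij
          omega
        obtain ⟨_, hprec⟩ := ih j hfuelj hcan hw3
        have hPM : P1 ++ [j] ++ M = Q1 := by rw [hM1]; simp
        rw [hPM] at hprec
        exact Prec.more i j _ _ (st P1) (st Q1) hij hjne hstP hstQ hup hprec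


/-! ### last letter determination -/

theorem st_concat (u : List (Fin n)) (c : Fin n) : st (u ++ [c]) = step c (st u) := by
  rw [st, stF_append]; rfl

def MatchP (x : Fin n → ℕ) (m : Fin n) : Prop := x m = rec' x m

theorem canonical_prefix {u v : List (Fin n)} (h : Canonical (u ++ v)) : Canonical u := by
  intro p m q i hfac
  exact h p m (q ++ v) i (by rw [hfac]; simp)

theorem canonical_suffix {u v : List (Fin n)} (h : Canonical (u ++ v)) : Canonical v := by
  intro p m q i hfac
  exact h (u ++ p) m q i (by rw [hfac]; simp)

theorem match_last {u : List (Fin n)} {c : Fin n} : MatchP (st (u ++ [c])) c := by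
  unfold MatchP
  rw [st_last' (A := u) (B := []) (by simp) (List.not_mem_nil)]
  apply (rec'_congr _).symm
  intro k hk
  rw [st_concat, step_other (ne_of_gt hk)]

theorem match_min {w u : List (Fin n)} {c m : Fin n} (hcan : Canonical w)
    (hw : w = u ++ [c]) (hm : MatchP (st w) m) : c ≤ m := by
  by_contra hcm
  have hmc : m < c := not_le.mp hcm
  have hm0 : st w m ≠ 0 := by rw [hm]; exact rec'_ne_zero _ _
  obtain ⟨A, B, hAB, hmB, hstm⟩ := st_ne_zero_split hm0
  have key : ∀ k, m < k → st A k = st w k := rec'_inj (hstm.symm.trans hm)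
  have hwc : st w c = rec' (st u) c := st_last' (by simpa using hw) (List.not_mem_nil)
  have hAc : st A c ≠ 0 := by
    rw [key c hmc, hwc]; exact rec'_ne_zero _ _
  obtain ⟨A1, A2, hA, hcA2, hstA⟩ := st_ne_zero_split hAc
  have h1 : w = A1 ++ c :: (A2 ++ [m] ++ B) := by rw [hAB, hA]; simp
  rcases two_splits (c := c) (B' := ([] : List (Fin n))) h1 (by simpa using hw)
      (List.not_mem_nil) with heq | ⟨M, hM1, hM2⟩
  · rw [heq] at h1
    have h2 : u ++ c :: (A2 ++ [m] ++ B) = u ++ [c] := h1.symm.trans hw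
    have h3 := List.append_cancel_left h2
    simp at h3
  · have hw4 : w = A1 ++ [c] ++ M ++ [c] ++ ([] : List (Fin n)) := by
      rw [hw, hM1]; simp
    obtain ⟨⟨k2, hk2, hne2⟩, _⟩ := ct_main n c (Nat.sub_le n c.val) hcan hw4
    have hu : A1 ++ [c] ++ M = u := by rw [hM1]; simp
    rw [hu] at hne2
    have : rec' (st A1) c = rec' (st u) c := by
      rw [← hstA, key c hmc, hwc]
    exact hne2 (rec'_inj this k2 hk2)

theorem last_eq {w w' u u' : List (Fin n)} {c c' : Fin n}
    (hcan : Canonical w) (hcan' : Canonical w')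
    (hw : w = u ++ [c]) (hw' : w' = u' ++ [c']) (hst : st w = st w') : c = c' := by
  have h1 : MatchP (st w) c := by rw [hw]; exact match_last
  have h2 : MatchP (st w') c' := by rw [hw']; exact match_last
  exact le_antisymm (match_min hcan hw (by rw [hst]; exact h2))
    (match_min hcan' hw' (by rw [← hst]; exact h1))

/-! ### The photo arguments -/

theorem singleton_suffix_inj {A B : List (Fin n)} {a b : Fin n}
    (h : A ++ [a] = B ++ [b]) : A = B ∧ a = b := by
  have := List.append_inj' h (by simp)
  exact ⟨this.1, by simpa using this.2⟩

theorem photo_absurd {u u' : List (Fin n)} {c : Fin n}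
    (hcan' : Canonical (u' ++ [c]))
    (hst : st (u ++ [c]) = st (u' ++ [c])) (hcu : c ∉ u) (hcu' : c ∈ u') : False := by
  obtain ⟨U1, x, U2, hU, hx, hU2⟩ := exists_last_split ⟨c, hcu', rfl⟩
  subst hx
  have hcU2 : c ∉ U2 := fun hc => hU2 c hc rfl
  obtain ⟨_, hSml⟩ := hcan' U1 U2 [] c (by rw [hU]; simp)
  obtain ⟨V1, d, V2, hV, hdc, hV2⟩ := exists_last_split hSml
  have hdV2c : d ∉ V2 ++ [c] := by
    intro hc
    rcases List.mem_append.mp hc with h | h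
    · have h1 := hV2 d h
      exact h1 hdc
    · simp at h
      exact absurd (h ▸ hdc) (lt_irrefl c)
  have hw'fac : u' ++ [c] = (U1 ++ [c] ++ V1) ++ [d] ++ (V2 ++ [c]) := by
    rw [hU, hV]; simp
  have hphoto' : st (u' ++ [c]) d = rec' (st (U1 ++ [c] ++ V1)) d :=
    st_last' hw'fac hdV2c
  have hcV1 : c ∉ V1 := fun hc => hcU2 (by rw [hV]; simp [hc])
  have hsnapc : st (U1 ++ [c] ++ V1) c = rec' (st U1) c :=
    st_last' (by simp) hcV1
  -- transfer to w
  have hwd : st (u ++ [c]) d = rec' (st (U1 ++ [c] ++ V1)) d := by rw [hst]; exact hphoto'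
  have hwd0 : st (u ++ [c]) d ≠ 0 := by rw [hwd]; exact rec'_ne_zero _ _
  obtain ⟨W1, W2, hW, hdW2, hstW⟩ := st_ne_zero_split hwd0
  have hWrec : ∀ k, d < k → st W1 k = st (U1 ++ [c] ++ V1) k :=
    rec'_inj (hstW.symm.trans hwd)
  have hW1c : st W1 c ≠ 0 := by
    rw [hWrec c hdc, hsnapc]; exact rec'_ne_zero _ _
  have hcW1 : c ∈ W1 := by
    by_contra hc
    exact hW1c (st_zero_of_notmem hc)
  -- W1 is a prefix of u
  have hlen : W1.length ≤ u.length := by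
    have := congrArg List.length hW
    simp [List.length_append] at this
    omega
  have hW1pre : (u ++ [c]).take W1.length = W1 := by
    rw [hW]; exact List.take_left
  have htk : (u ++ [c]).take W1.length = u.take W1.length := by
    rw [List.take_append, Nat.sub_eq_zero_of_le hlen]
    simp
  have : c ∈ u.take W1.length := by rw [← htk, hW1pre]; exact hcW1
  exact hcu (List.take_subset _ u this)

theorem photo_half {u u' : List (Fin n)} {c : Fin n} {U1 U2 U1' U2' : List (Fin n)}
    (hcan : Canonical (u ++ [c])) (hcan' : Canonical (u' ++ [c]))
    (hst : st (u ++ [c]) = st (u' ++ [c]))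
    (hU : u = U1 ++ c :: U2) (hcU2 : c ∉ U2)
    (hU' : u' = U1' ++ c :: U2') (hcU2' : c ∉ U2') :
    (∀ k, c < k → st U1' k = st U1 k) ∨ Prec c (st U1) (st U1') := by
  obtain ⟨_, hSml⟩ := hcan U1 U2 [] c (by rw [hU]; simp)
  obtain ⟨V1, d, V2, hV, hdc, hV2⟩ := exists_last_split hSml
  have hdV2c : d ∉ V2 ++ [c] := by
    intro hc
    rcases List.mem_append.mp hc with h | h
    · exact (hV2 d h) hdc
    · simp at h
      exact absurd (h ▸ hdc) (lt_irrefl c)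
  have hwfac : u ++ [c] = (U1 ++ [c] ++ V1) ++ [d] ++ (V2 ++ [c]) := by
    rw [hU, hV]; simp
  have hphoto : st (u ++ [c]) d = rec' (st (U1 ++ [c] ++ V1)) d :=
    st_last' hwfac hdV2c
  have hcV1 : c ∉ V1 := fun hc => hcU2 (by rw [hV]; simp [hc])
  have hsnapc : st (U1 ++ [c] ++ V1) c = rec' (st U1) c :=
    st_last' (by simp) hcV1
  -- transfer to w'
  have hwd : st (u' ++ [c]) d = rec' (st (U1 ++ [c] ++ V1)) d := by rw [← hst]; exact hphoto
  have hwd0 : st (u' ++ [c]) d ≠ 0 := by rw [hwd]; exact rec'_ne_zero _ _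
  obtain ⟨W1, W2, hW, hdW2, hstW⟩ := st_ne_zero_split hwd0
  have hWrec : ∀ k, d < k → st W1 k = st (U1 ++ [c] ++ V1) k :=
    rec'_inj (hstW.symm.trans hwd)
  have hW1c : st W1 c ≠ 0 := by
    rw [hWrec c hdc, hsnapc]; exact rec'_ne_zero _ _
  obtain ⟨Z1, Z2, hZ, hcZ2, hstZ⟩ := st_ne_zero_split hW1c
  have ezs : ∀ k, c < k → st Z1 k = st U1 k :=
    rec'_inj (hstZ.symm.trans (hWrec c hdc) |>.trans hsnapc)
  -- W2 nonempty
  have hW2ne : W2 ≠ [] := by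
    intro hc
    rw [hc] at hW
    obtain ⟨_, hdc'⟩ := singleton_suffix_inj hW.symm
    exact absurd (hdc' ▸ hdc) (lt_irrefl c)
  -- locate the c-position |Z1| in w'
  have hsplitw' : u' ++ [c] = Z1 ++ c :: (Z2 ++ d :: W2) := by
    rw [hW, hZ]; simp
  rcases two_splits (A := Z1) (w := u' ++ [c]) (B := Z2 ++ d :: W2) (A' := u')
      (B' := ([] : List (Fin n))) (c := c) hsplitw' (by simp)
      (List.not_mem_nil) with heq | ⟨M, hM1, hM2⟩
  · -- Z1 = u' : impossible
    exfalso
    rw [heq] at hsplitw'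
    have h2 := List.append_cancel_left hsplitw'
    simp at h2
  · -- u' = Z1 ++ c :: M
    rcases two_splits (A := Z1) (w := u') (B := M) (A' := U1') (B' := U2') (c := c)
      hM1 hU' hcU2' with heq2 | ⟨M2, hM21, hM22⟩
    · -- Z1 = U1'
      left
      intro k hk
      rw [← heq2]
      exact ezs k hk
    · -- two c-positions in u' : apply CT
      right
      have hw'fac2 : u' ++ [c] = Z1 ++ [c] ++ M2 ++ [c] ++ (U2' ++ [c]) := by
        rw [hU', hM21]; simp
      obtain ⟨_, hprec⟩ := ct_main n c (Nat.sub_le n c.val) hcan' hw'fac2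
      have hZM : Z1 ++ [c] ++ M2 = U1' := by rw [hM21]; simp
      rw [hZM] at hprec
      exact hprec.ext' (fun k hk => (ezs k hk).symm) (fun k _ => rfl)

theorem coordc_eq {u u' : List (Fin n)} {c : Fin n}
    (hcan : Canonical (u ++ [c])) (hcan' : Canonical (u' ++ [c]))
    (hst : st (u ++ [c]) = st (u' ++ [c])) : st u c = st u' c := by
  by_cases hcu : c ∈ u
  · by_cases hcu' : c ∈ u'
    · obtain ⟨U1, x, U2, hU, hx, hU2⟩ := exists_last_split ⟨c, hcu, rfl⟩
      subst hx
      have hcU2 : c ∉ U2 := fun hc => hU2 c hc rfl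
      obtain ⟨U1', x', U2', hU', hx', hU2'⟩ := exists_last_split ⟨c, hcu', rfl⟩
      subst hx'
      have hcU2' : c ∉ U2' := fun hc => hU2' c hc rfl
      have h1 := photo_half hcan hcan' hst hU hcU2 hU' hcU2'
      have h2 := photo_half hcan' hcan hst.symm hU' hcU2' hU hcU2
      have e1 : st u c = rec' (st U1) c := st_last' (by rw [hU]; simp) hcU2
      have e2 : st u' c = rec' (st U1') c := st_last' (by rw [hU']; simp) hcU2'
      rcases h1 with hh | hp1
      · rw [e1, e2, rec'_congr (fun k hk => (hh k hk))]
      · rcases h2 with hh | hp2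
        · rw [e1, e2, rec'_congr (fun k hk => (hh k hk).symm)]
        · exact absurd hp2 (fun h => hp1.asymm h)
    · exact absurd (photo_absurd hcan hst.symm hcu' hcu) id
  · by_cases hcu' : c ∈ u'
    · exact absurd (photo_absurd hcan' hst hcu hcu') id
    · rw [st_zero_of_notmem hcu, st_zero_of_notmem hcu']

/-! ### Main injectivity -/

theorem inj_main : ∀ (fuel : ℕ) {w w' : List (Fin n)}, w.length + w'.length ≤ fuel →
    Canonical w → Canonical w' → st w = st w' → w = w' := by
  intro fuel
  induction fuel with
  | zero =>
    intro w w' hlen _ _ _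
    have hw : w.length = 0 := by omega
    have hw' : w'.length = 0 := by omega
    rw [List.length_eq_zero_iff.mp hw, List.length_eq_zero_iff.mp hw']
  | succ fuel ih =>
    intro w w' hlen hcan hcan' hst
    rcases List.eq_nil_or_concat' w with rfl | ⟨u, c, rfl⟩
    · rcases List.eq_nil_or_concat' w' with rfl | ⟨u', c', rfl⟩
      · rfl
      · exfalso
        have h1 : st (u' ++ [c']) c' = rec' (st u') c' := st_last' (by simp) (List.not_mem_nil)
        have h2 : st ([] : List (Fin n)) c' = 0 := rfl
        rw [← hst, h2] at h1
        exact rec'_ne_zero _ _ h1.symm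
    · rcases List.eq_nil_or_concat' w' with rfl | ⟨u', c', rfl⟩
      · exfalso
        have h1 : st (u ++ [c]) c = rec' (st u) c := st_last' (by simp) (List.not_mem_nil)
        have h2 : st ([] : List (Fin n)) c = 0 := rfl
        rw [hst, h2] at h1
        exact rec'_ne_zero _ _ h1.symm
      · have hcc : c = c' := last_eq hcan hcan' rfl rfl hst
        subst hcc
        have hcanu : Canonical u := canonical_prefix hcan
        have hcanu' : Canonical u' := canonical_prefix hcan'
        have hside : ∀ k, k ≠ c → st u k = st u' k := by
          intro k hk
          have h := congrFun hst k
          rwa [st_concat, st_concat, step_other hk, step_other hk] at h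
        have hc : st u c = st u' c := coordc_eq hcan hcan' hst
        have hstu : st u = st u' := by
          funext k
          by_cases hk : k = c
          · rw [hk]; exact hc
          · exact hside k hk
        have hlen2 : u.length + u'.length ≤ fuel := by
          simp [List.length_append] at hlen
          omega
        rw [ih hlen2 hcanu hcanu' hstu]


/-! ### Monoid algebra: phiL lemmas and base relations -/

theorem phiL_append (A B : List (Fin n)) : phiL n (A ++ B) = phiL n A * phiL n B := by
  unfold phiL
  rw [FreeMonoid.ofList_append, map_mul]

theorem phiL_nil : phiL n [] = 1 := by
  unfold phiL
  exact map_one _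

theorem phiL_singleton (a : Fin n) : phiL n [a] = gen a := rfl

theorem phiL_cons (a : Fin n) (l : List (Fin n)) : phiL n (a :: l) = gen a * phiL n l := by
  rw [show a :: l = [a] ++ l from rfl, phiL_append, phiL_singleton]

theorem gen_idem (i : Fin n) : gen i * gen i = gen i := by
  have h : conGen (Rel n) (.of i * .of i) (.of i) :=
    ConGen.Rel.of _ _ (Or.inl ⟨i, rfl, rfl⟩)
  have := (Con.eq _).mpr h
  unfold gen; rw [← map_mul]; exact this

theorem rel_iji {i j : Fin n} (h : j < i) : gen i * gen j * gen i = gen i * gen j := by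
  have hr : conGen (Rel n) (.of i * .of j * .of i) (.of i * .of j) :=
    ConGen.Rel.of _ _ (Or.inr ⟨i, j, h, Or.inl ⟨rfl, rfl⟩⟩)
  have := (Con.eq _).mpr hr
  unfold gen; rw [← map_mul, ← map_mul]; exact this

theorem rel_jij {i j : Fin n} (h : j < i) : gen j * gen i * gen j = gen i * gen j := by
  have hr : conGen (Rel n) (.of j * .of i * .of j) (.of i * .of j) :=
    ConGen.Rel.of _ _ (Or.inr ⟨i, j, h, Or.inr ⟨rfl, rfl⟩⟩)
  have := (Con.eq _).mpr hr
  unfold gen; rw [← map_mul, ← map_mul]; exact this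

theorem lem_L (i : Fin n) : ∀ u : List (Fin n), (∀ j ∈ u, j < i) →
    gen i * phiL n u * gen i = gen i * phiL n u
  | [], _ => by simp only [phiL_nil, mul_one, gen_idem]
  | j :: u', h => by
    have hj : j < i := h j (List.mem_cons_self)
    have ih := lem_L i u' (fun k hk => h k (List.mem_cons_of_mem j hk))
    rw [phiL_cons]
    calc gen i * (gen j * phiL n u') * gen i
        = gen i * gen j * (phiL n u' * gen i) := by rw [mul_assoc, mul_assoc, mul_assoc]
      _ = gen i * gen j * gen i * (phiL n u' * gen i) := by rw [rel_iji hj]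
      _ = gen i * gen j * (gen i * phiL n u' * gen i) := by
          simp only [mul_assoc]
      _ = gen i * gen j * (gen i * phiL n u') := by rw [ih]
      _ = gen i * gen j * gen i * phiL n u' := by rw [mul_assoc (gen i * gen j)]
      _ = gen i * gen j * phiL n u' := by rw [rel_iji hj]
      _ = gen i * (gen j * phiL n u') := by rw [mul_assoc]

theorem lem_M (i : Fin n) (u : List (Fin n)) (h : ∀ j ∈ u, i < j) :
    gen i * phiL n u * gen i = phiL n u * gen i := by
  induction u using List.reverseRecOn with
  | nil => simp only [phiL_nil, mul_one, one_mul, gen_idem]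
  | append_singleton u' j ih =>
    have hj : i < j := h j (by simp)
    have ih' := ih (fun k hk => h k (by simp [hk]))
    rw [phiL_append, phiL_singleton]
    calc gen i * (phiL n u' * gen j) * gen i
        = gen i * phiL n u' * (gen j * gen i) := by rw [← mul_assoc, mul_assoc]
      _ = gen i * phiL n u' * (gen i * gen j * gen i) := by rw [rel_jij hj]
      _ = gen i * phiL n u' * gen i * (gen j * gen i) := by
          simp only [mul_assoc]
      _ = phiL n u' * gen i * (gen j * gen i) := by rw [ih']
      _ = phiL n u' * (gen i * gen j * gen i) := by
          simp only [mul_assoc]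
      _ = phiL n u' * (gen j * gen i) := by rw [rel_jij hj]
      _ = phiL n u' * gen j * gen i := by rw [mul_assoc]

/-! ### Reduction to canonical form -/

theorem canonical_nil : Canonical ([] : List (Fin n)) := by
  intro p u q i h
  exfalso
  have := congrArg List.length h
  simp [List.length_append] at this

set_option maxHeartbeats 1000000 in
theorem extract : ∀ (fuel : ℕ) (u : List (Fin n)), u.length ≤ fuel →
    ∀ (w p q : List (Fin n)) (i : Fin n),
      w = p ++ [i] ++ u ++ [i] ++ q →
      ((∀ j ∈ u, ¬ i < j) ∨ (∀ j ∈ u, ¬ j < i)) →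
      ∃ (p' u' q' : List (Fin n)) (i' : Fin n), w = p' ++ [i'] ++ u' ++ [i'] ++ q' ∧
        ((∀ j ∈ u', ¬ i' < j) ∨ (∀ j ∈ u', ¬ j < i')) ∧ i' ∉ u' := by
  intro fuel
  induction fuel with
  | zero =>
    intro u hu w p q i hfac hcond
    have : u = [] := List.length_eq_zero_iff.mp (by omega)
    subst this
    exact ⟨p, [], q, i, hfac, hcond, List.not_mem_nil⟩
  | succ fuel ih =>
    intro u hu w p q i hfac hcond
    by_cases hmem : i ∈ u
    · obtain ⟨u1, u2, hu12⟩ := List.append_of_mem hmem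
      have hfac2 : w = p ++ [i] ++ u1 ++ [i] ++ (u2 ++ [i] ++ q) := by
        rw [hfac, hu12]; simp
      have hcond2 : (∀ j ∈ u1, ¬ i < j) ∨ (∀ j ∈ u1, ¬ j < i) := by
        rcases hcond with h | h
        · exact Or.inl (fun j hj => h j (by rw [hu12]; simp [hj]))
        · exact Or.inr (fun j hj => h j (by rw [hu12]; simp [hj]))
      have hlen : u1.length ≤ fuel := by
        have := congrArg List.length hu12
        simp [List.length_append] at this
        omega
      exact ih u1 hlen w p (u2 ++ [i] ++ q) i hfac2 hcond2
    · exact ⟨p, u, q, i, hfac, hcond, hmem⟩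

theorem reduce : ∀ (fuel : ℕ) (w : List (Fin n)), w.length ≤ fuel →
    ∃ v, Canonical v ∧ phiL n v = phiL n w := by
  intro fuel
  induction fuel with
  | zero =>
    intro w hw
    have : w = [] := List.length_eq_zero_iff.mp (by omega)
    subst this
    exact ⟨[], canonical_nil, rfl⟩
  | succ fuel ih =>
    intro w hw
    by_cases hC : Canonical w
    · exact ⟨w, hC, rfl⟩
    · unfold Canonical at hC
      push_neg at hC
      obtain ⟨p, u, q, i, hfac, hbad⟩ := hC
      have hcond : (∀ j ∈ u, ¬ i < j) ∨ (∀ j ∈ u, ¬ j < i) := by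
        by_cases hA : ∃ j ∈ u, i < j
        · have hB := hbad hA
          exact Or.inr (fun j hj => not_lt.mpr (hB j hj))
        · push_neg at hA
          exact Or.inl (fun j hj => not_lt.mpr (hA j hj))
      obtain ⟨p', u', q', i', hfac', hcond', hnot⟩ :=
        extract u.length u le_rfl w p q i hfac hcond
      have hlw : w.length = p'.length + u'.length + q'.length + 2 := by
        rw [hfac']; simp [List.length_append]; omega
      rcases hcond' with hsm | hbg
      · -- all letters of u' are < i'
        have hall : ∀ j ∈ u', j < i' := by
          intro j hj
          rcases lt_trichotomy j i' with h | h | h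
          · exact h
          · exact absurd (h ▸ hj) hnot
          · exact absurd h (hsm j hj)
        have heq : phiL n w = phiL n (p' ++ [i'] ++ u' ++ q') := by
          rw [hfac']
          simp only [phiL_append, phiL_singleton]
          have h2 : phiL n p' * (gen i' * phiL n u' * gen i') * phiL n q'
              = phiL n p' * (gen i' * phiL n u') * phiL n q' := by rw [lem_L i' u' hall]
          simp only [← mul_assoc] at h2
          simpa only [← mul_assoc] using h2
        have hlen2 : (p' ++ [i'] ++ u' ++ q').length ≤ fuel := by
          simp [List.length_append]
          omega
        obtain ⟨v, hv, hve⟩ := ih _ hlen2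
        exact ⟨v, hv, hve.trans heq.symm⟩
      · -- all letters of u' are > i'
        have hall : ∀ j ∈ u', i' < j := by
          intro j hj
          rcases lt_trichotomy j i' with h | h | h
          · exact absurd h (hbg j hj)
          · exact absurd (h ▸ hj) hnot
          · exact h
        have heq : phiL n w = phiL n (p' ++ u' ++ [i'] ++ q') := by
          rw [hfac']
          simp only [phiL_append, phiL_singleton]
          have h2 : phiL n p' * (gen i' * phiL n u' * gen i') * phiL n q'
              = phiL n p' * (phiL n u' * gen i') * phiL n q' := by rw [lem_M i' u' hall]
          simp only [← mul_assoc] at h2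
          simpa only [← mul_assoc] using h2
        have hlen2 : (p' ++ u' ++ [i'] ++ q').length ≤ fuel := by
          simp [List.length_append]
          omega
        obtain ⟨v, hv, hve⟩ := ih _ hlen2
        exact ⟨v, hv, hve.trans heq.symm⟩

theorem phiL_surj (x : K n) : ∃ v, Canonical v ∧ phiL n v = x := by
  obtain ⟨f, rfl⟩ := Con.mk'_surjective (c := conGen (Rel n)) x
  obtain ⟨v, hv, hve⟩ := reduce (FreeMonoid.toList f).length (FreeMonoid.toList f) le_rfl
  refine ⟨v, hv, hve.trans ?_⟩
  show phiL n (FreeMonoid.toList f) = _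
  unfold phiL
  rw [FreeMonoid.ofList_toList]
  rfl


/-! ### Length bound and finiteness -/

theorem single_occ {w : List (Fin n)} (hcan : Canonical w) {kk : Fin n} {s t : List (Fin n)}
    (hw : w = s ++ kk :: t) (hmin : ∀ i ∈ w, kk.val ≤ i.val) : kk ∉ s ∧ kk ∉ t := by
  constructor
  · intro hs
    obtain ⟨s1, s2, hs12⟩ := List.append_of_mem hs
    have hfac : w = s1 ++ [kk] ++ s2 ++ [kk] ++ t := by rw [hw, hs12]; simp
    obtain ⟨_, y, hy, hlt⟩ := hcan s1 s2 t kk hfac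
    have hyw : y ∈ w := by rw [hfac]; simp [hy]
    have := hmin y hyw
    have : y.val < kk.val := hlt
    omega
  · intro ht
    obtain ⟨t1, t2, ht12⟩ := List.append_of_mem ht
    have hfac : w = s ++ [kk] ++ t1 ++ [kk] ++ t2 := by rw [hw, ht12]; simp
    obtain ⟨_, y, hy, hlt⟩ := hcan s t1 t2 kk hfac
    have hyw : y ∈ w := by rw [hfac]; simp [hy]
    have := hmin y hyw
    have : y.val < kk.val := hlt
    omega

theorem length_bound : ∀ (m k : ℕ), n - k ≤ m → ∀ w : List (Fin n), Canonical w →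
    (∀ i ∈ w, k ≤ i.val) → w.length ≤ 2 ^ (n - k) - 1 := by
  intro m
  induction m with
  | zero =>
    intro k hk w _ hmin
    have hw : w = [] := by
      apply List.eq_nil_iff_forall_not_mem.mpr
      intro a ha
      have h1 := hmin a ha
      have h2 := a.isLt
      omega
    subst hw
    simp
  | succ m ih =>
    intro k hk w hcan hmin
    by_cases hkn : n ≤ k
    · have hw : w = [] := by
        apply List.eq_nil_iff_forall_not_mem.mpr
        intro a ha
        have h1 := hmin a ha
        have h2 := a.isLt
        omega
      subst hw
      simp
    · push_neg at hkn
      set kk : Fin n := ⟨k, hkn⟩ with hkk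
      have hkval : kk.val = k := rfl
      by_cases hmem : kk ∈ w
      · obtain ⟨s, t, hw⟩ := List.append_of_mem hmem
        obtain ⟨hs, ht⟩ := single_occ hcan hw hmin
        have hcs : Canonical s := canonical_prefix (u := s) (v := kk :: t) (hw ▸ hcan)
        have hct : Canonical t := by
          have : w = (s ++ [kk]) ++ t := by rw [hw]; simp
          exact canonical_suffix (this ▸ hcan)
        have hmins : ∀ i ∈ s, k + 1 ≤ i.val := by
          intro i hi
          have h1 : k ≤ i.val := hmin i (by rw [hw]; simp [hi])
          rcases Nat.lt_or_ge k i.val with h | h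
          · omega
          · exfalso
            have : i = kk := Fin.ext (by rw [hkval]; omega)
            exact hs (this ▸ hi)
        have hmint : ∀ i ∈ t, k + 1 ≤ i.val := by
          intro i hi
          have h1 : k ≤ i.val := hmin i (by rw [hw]; simp [hi])
          rcases Nat.lt_or_ge k i.val with h | h
          · omega
          · exfalso
            have : i = kk := Fin.ext (by rw [hkval]; omega)
            exact ht (this ▸ hi)
        have hbs := ih (k + 1) (by omega) s hcs hmins
        have hbt := ih (k + 1) (by omega) t hct hmint
        have hlw : w.length = s.length + t.length + 1 := by rw [hw]; simp; omega
        have hnk : n - k = (n - (k + 1)) + 1 := by omega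
        rw [hnk, pow_succ]
        have hpos : 1 ≤ 2 ^ (n - (k + 1)) := Nat.one_le_two_pow
        omega
      · have hmin' : ∀ i ∈ w, k + 1 ≤ i.val := by
          intro i hi
          have h1 := hmin i hi
          rcases Nat.lt_or_ge k i.val with h | h
          · omega
          · exfalso
            have : i = kk := Fin.ext (by rw [hkval]; omega)
            exact hmem (this ▸ hi)
        have hb := ih (k + 1) (by omega) w hcan hmin'
        have hmono : 2 ^ (n - (k + 1)) ≤ 2 ^ (n - k) :=
          Nat.pow_le_pow_right (by omega) (by omega)
        omega

theorem canonical_length {w : List (Fin n)} (h : Canonical w) : w.length < 2 ^ n := by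
  have hb := length_bound n 0 (by omega) w h (fun _ _ => Nat.zero_le _)
  simp only [Nat.sub_zero] at hb
  have : 1 ≤ 2 ^ n := Nat.one_le_two_pow
  omega

def CanonT (n : ℕ) := {l : List (Fin n) // Canonical l}

theorem canonT_finite : Finite (CanonT n) := by
  apply Finite.of_injective (f := fun l : CanonT n => (fun t : Fin (2 ^ n) => l.1[t.val]?))
  intro a b hab
  apply Subtype.ext
  apply List.ext_getElem?
  intro m
  by_cases hm : m < 2 ^ n
  · exact congrFun hab ⟨m, hm⟩
  · rw [List.getElem?_eq_none (by have := canonical_length a.2; omega),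
      List.getElem?_eq_none (by have := canonical_length b.2; omega)]

/-! ### The flip involution -/

def flipL (w : List (Fin n)) : List (Fin n) := w.map Fin.rev

theorem flipL_invol (w : List (Fin n)) : flipL (flipL w) = w := by
  simp [flipL, List.map_map, Function.comp_def, Fin.rev_rev]

theorem canonical_flip {w : List (Fin n)} (h : Canonical w) : Canonical (flipL w) := by
  intro p u q i hfac
  have hw' : w = flipL p ++ [Fin.rev i] ++ flipL u ++ [Fin.rev i] ++ flipL q := by
    rw [show w = flipL (flipL w) from (flipL_invol w).symm, hfac]
    simp [flipL]
  obtain ⟨⟨j, hj, hlt⟩, ⟨k, hk, hlt'⟩⟩ := h _ _ _ _ hw'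
  obtain ⟨a, ha, rfl⟩ := List.mem_map.mp hj
  obtain ⟨b, hb, rfl⟩ := List.mem_map.mp hk
  exact ⟨⟨b, hb, Fin.rev_lt_rev.mp hlt'⟩, ⟨a, ha, Fin.rev_lt_rev.mp hlt⟩⟩

theorem flip_fix_letters : ∀ {l : List (Fin n)}, flipL l = l → ∀ a ∈ l, Fin.rev a = a
  | [], _, a, ha => absurd ha (List.not_mem_nil)
  | b :: l, h, a, ha => by
    have h1 : Fin.rev b = b ∧ flipL l = l := by
      have : Fin.rev b :: flipL l = b :: l := h
      exact ⟨(List.cons.injEq _ _ _ _ ▸ this).1, (List.cons.injEq _ _ _ _ ▸ this).2⟩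
    rcases List.mem_cons.mp ha with rfl | ha'
    · exact h1.1
    · exact flip_fix_letters h1.2 a ha'

theorem canonical_singleton (a : Fin n) : Canonical [a] := by
  intro p u q i h
  exfalso
  have := congrArg List.length h
  simp [List.length_append] at this
  omega

/-! ### Parity via involution -/

theorem involution_parity {α : Type*} [Fintype α] (f : α → α)
    (hf : Function.Involutive f) :
    Fintype.card α % 2 = Nat.card {x : α // f x = x} % 2 := by
  classical
  have hsub : Nat.card {x : α // f x = x} = (Finset.univ.filter fun x => f x = x).card := by
    rw [Nat.card_eq_fintype_card, Fintype.card_subtype]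
  rw [hsub]
  have hsplit := Finset.card_filter_add_card_filter_not
    (s := (Finset.univ : Finset α)) (p := fun x => f x = x)
  have heven : Even ((Finset.univ.filter fun x => ¬ f x = x).card) := by
    set s := Finset.univ.filter fun x => ¬ f x = x with hs
    have hprod : ∏ _x ∈ s, (-1 : ℤ) = 1 := by
      apply Finset.prod_involution (g := fun a _ => f a)
      · intro a _; norm_num
      · intro a ha _
        exact (Finset.mem_filter.mp ha).2
      · intro a ha
        refine Finset.mem_filter.mpr ⟨Finset.mem_univ _, ?_⟩
        rw [hf a]
        exact fun hc => (Finset.mem_filter.mp ha).2 hc.symm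
      · intro a _
        exact hf a
    rw [Finset.prod_const] at hprod
    by_contra hodd
    rw [Nat.not_even_iff_odd] at hodd
    rw [Odd.neg_one_pow hodd] at hprod
    norm_num at hprod
  obtain ⟨m, hm⟩ := heven
  rw [Fintype.card]
  omega

/-! ### Counting fixed points -/

theorem rev_fix_val {a : Fin n} (h : Fin.rev a = a) : n = 2 * a.val + 1 := by
  have h1 : (Fin.rev a).val = a.val := congrArg Fin.val h
  rw [Fin.val_rev] at h1
  have := a.isLt
  omega

theorem rev_fix_of_val {a : Fin n} (h : n = 2 * a.val + 1) : Fin.rev a = a := by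
  apply Fin.ext
  rw [Fin.val_rev]
  omega

theorem fixed_list_cases {l : List (Fin n)} (hcan : Canonical l) (hfix : flipL l = l) :
    l = [] ∨ ∃ a : Fin n, n = 2 * a.val + 1 ∧ l = [a] := by
  match l, hcan, hfix with
  | [], _, _ => exact Or.inl rfl
  | [a], _, hfix =>
    have := flip_fix_letters hfix a (by simp)
    exact Or.inr ⟨a, rev_fix_val this, rfl⟩
  | a :: b :: r, hcan, hfix =>
    exfalso
    have ha := flip_fix_letters hfix a (by simp)
    have hb := flip_fix_letters hfix b (by simp)
    have hav := rev_fix_val ha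
    have hbv := rev_fix_val hb
    have hab : a = b := Fin.ext (by omega)
    obtain ⟨⟨j, hj, _⟩, _⟩ := hcan [] [] r a (by rw [hab]; simp)
    exact absurd hj (List.not_mem_nil)

/-! ### Assembling the cardinality -/

theorem phiL_bijective :
    Function.Bijective (fun l : CanonT n => phiL n l.1) := by
  constructor
  · intro a b h
    exact Subtype.ext (inj_main (a.1.length + b.1.length) le_rfl a.2 b.2 (st_eq_of_phiL_eq h))
  · intro x
    obtain ⟨v, hv, hve⟩ := phiL_surj x
    exact ⟨⟨v, hv⟩, hve⟩

theorem card_K_parity (m : ℕ) : Nat.card (K m) % 2 = (m + 1) % 2 := by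
  have hfin : Finite (CanonT m) := canonT_finite
  have hcard : Nat.card (K m) = Nat.card (CanonT m) :=
    (Nat.card_eq_of_bijective _ (phiL_bijective (n := m))).symm
  classical
  have fint : Fintype (CanonT m) := Fintype.ofFinite _
  rw [hcard, Nat.card_eq_fintype_card]
  have hinv : Function.Involutive
      (fun l : CanonT m => (⟨flipL l.1, canonical_flip l.2⟩ : CanonT m)) :=
    fun l => Subtype.ext (flipL_invol l.1)
  rw [involution_parity _ hinv]
  set F : CanonT m → CanonT m :=
    fun l : CanonT m => (⟨flipL l.1, canonical_flip l.2⟩ : CanonT m) with hF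
  set nilC : CanonT m := ⟨[], canonical_nil⟩ with hnilC
  have hnfix : F nilC = nilC := Subtype.ext rfl
  rcases Nat.even_or_odd m with he | ho
  · -- m even : only fixed point is nil
    have h1 : Nat.card {x : CanonT m // F x = x} = 1 := by
      rw [Nat.card_eq_one_iff_unique]
      constructor
      · constructor
        intro a b
        have hfa : flipL a.1.1 = a.1.1 := congrArg Subtype.val a.2
        have hfb : flipL b.1.1 = b.1.1 := congrArg Subtype.val b.2
        have hea : a.1.1 = [] := by
          rcases fixed_list_cases a.1.2 hfa with h | ⟨c, hval, _⟩
          · exact h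
          · exfalso; obtain ⟨e, he'⟩ := he; omega
        have heb : b.1.1 = [] := by
          rcases fixed_list_cases b.1.2 hfb with h | ⟨c, hval, _⟩
          · exact h
          · exfalso; obtain ⟨e, he'⟩ := he; omega
        exact Subtype.ext (Subtype.ext (hea.trans heb.symm))
      · exact ⟨⟨nilC, hnfix⟩⟩
    rw [h1]
    obtain ⟨e, he'⟩ := he
    omega
  · -- m odd : fixed points are nil and [mid]
    obtain ⟨e, he'⟩ := ho
    have hmide : e < m := by omega
    set mid : Fin m := ⟨e, hmide⟩ with hmid
    have hmidval : mid.val = e := rfl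
    set midC : CanonT m := ⟨[mid], canonical_singleton mid⟩ with hmidC
    have hmfix : F midC = midC := by
      apply Subtype.ext
      show flipL [mid] = [mid]
      simp only [flipL, List.map_cons, List.map_nil]
      rw [rev_fix_of_val (by rw [hmidval]; omega)]
    have h2 : Nat.card {x : CanonT m // F x = x} = 2 := by
      rw [Nat.card_eq_two_iff]
      refine ⟨⟨nilC, hnfix⟩, ⟨midC, hmfix⟩, ?_, ?_⟩
      · intro hc
        have h3 : ([] : List (Fin m)) = [mid] :=
          congrArg (fun z : {x : CanonT m // F x = x} => z.1.1) hc
        simp at h3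
      · apply Set.eq_univ_iff_forall.mpr
        intro z
        have hfz : flipL z.1.1 = z.1.1 := congrArg Subtype.val z.2
        rcases fixed_list_cases z.1.2 hfz with h | ⟨c, hval, hl⟩
        · left
          exact Subtype.ext (Subtype.ext h)
        · right
          apply Subtype.ext
          apply Subtype.ext
          rw [hl]
          have : c = mid := Fin.ext (by rw [hmidval]; omega)
          rw [this]
    rw [h2]
    omega

/-- For `n ≥ 3`, `|K n| ≡ |K (n-2)| (mod 2)`. -/
theorem card_mod_two (n : ℕ) (hn : 3 ≤ n) :
    Nat.card (K n) % 2 = Nat.card (K (n - 2)) % 2 := by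
  rw [card_K_parity n, card_K_parity (n - 2)]
  omega

end Kiselman
end

section
/- Let n ≥ 1 and let v, w be words over the alphabet A = {a_1, …, a_n}. If v is canonical and φ(v) = φ(w), then v is a quasi-subword of w, i.e. v is a (not necessarily contiguous) subsequence of w. -/
namespace Kiselman

/-!  ### A rewriting system for Kiselman's semigroup

We prove the theorem via the length-reducing rewriting system on words given by
`x m x → m x` (when all letters of `m` are greater than `x`) and
`x m x → x m` (when all letters of `m` are smaller than `x`).
This system is strongly confluent, each step deletes one letter, canonical words are
exactly... (we only need: canonical words admit no step), and the Kiselman relations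
are single steps.  Hence every word has a unique normal form, which is a sublist of it,
and `φ`-equal words have equal normal forms. -/

section Rewrite

variable {n : ℕ}

/-- One rewriting step (factorization form). -/
def RedF (w w' : List (Fin n)) : Prop :=
  ∃ (p m q : List (Fin n)) (x : Fin n),
    ((∀ y ∈ m, x < y) ∧ w = p ++ x :: (m ++ x :: q) ∧ w' = p ++ (m ++ x :: q)) ∨
    ((∀ y ∈ m, y < x) ∧ w = p ++ x :: (m ++ x :: q) ∧ w' = p ++ x :: (m ++ q))

theorem RedF.sublist {w w' : List (Fin n)} (h : RedF w w') : w'.Sublist w := by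
  rcases h with ⟨p, m, q, x, ⟨_, rfl, rfl⟩ | ⟨_, rfl, rfl⟩⟩
  · exact (List.append_sublist_append_left p).2 (List.sublist_cons_self _ _)
  · refine (List.append_sublist_append_left p).2 (List.cons_sublist_cons.2 ?_)
    exact (List.append_sublist_append_left m).2 (List.sublist_cons_self _ _)

theorem RedF.len {w w' : List (Fin n)} (h : RedF w w') : w'.length + 1 = w.length := by
  rcases h with ⟨p, m, q, x, ⟨_, rfl, rfl⟩ | ⟨_, rfl, rfl⟩⟩ <;> simp <;> omega

theorem RedF.append_left {u v : List (Fin n)} (a : List (Fin n)) (h : RedF u v) :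
    RedF (a ++ u) (a ++ v) := by
  rcases h with ⟨p, m, q, x, ⟨h1, rfl, rfl⟩ | ⟨h1, rfl, rfl⟩⟩
  · exact ⟨a ++ p, m, q, x, Or.inl ⟨h1, by simp, by simp⟩⟩
  · exact ⟨a ++ p, m, q, x, Or.inr ⟨h1, by simp, by simp⟩⟩

theorem RedF.append_right {u v : List (Fin n)} (h : RedF u v) (b : List (Fin n)) :
    RedF (u ++ b) (v ++ b) := by
  rcases h with ⟨p, m, q, x, ⟨h1, rfl, rfl⟩ | ⟨h1, rfl, rfl⟩⟩
  · exact ⟨p, m, q ++ b, x, Or.inl ⟨h1, by simp, by simp⟩⟩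
  · exact ⟨p, m, q ++ b, x, Or.inr ⟨h1, by simp, by simp⟩⟩

/-- The side condition, in index form: the letter at position `k` may be deleted. -/
def Cond (w : List (Fin n)) (k : ℕ) : Prop :=
  ∃ (l : ℕ) (hl : l < w.length) (hk : k < w.length),
    ((k < l ∧ w[l] = w[k] ∧ ∀ (c : ℕ) (hc : c < w.length), k < c → c < l → w[k] < w[c]) ∨
     (l < k ∧ w[l] = w[k] ∧ ∀ (c : ℕ) (hc : c < w.length), l < c → c < k → w[c] < w[k]))

/-- One rewriting step (index form). -/
def RedI (w w' : List (Fin n)) : Prop :=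
  ∃ (k : ℕ), k < w.length ∧ Cond w k ∧ w' = w.eraseIdx k

theorem eraseIdx_append_add {α : Type*} (p : List α) (L : List α) (j : ℕ) :
    (p ++ L).eraseIdx (p.length + j) = p ++ L.eraseIdx j := by
  induction p with
  | nil => simp
  | cons a t ih =>
      have : (a :: t).length + j = (t.length + j) + 1 := by simp; omega
      rw [this]
      simpa using ih

theorem eraseIdx_append_len {α : Type*} (m : List α) (x : α) (q : List α) :
    (m ++ x :: q).eraseIdx m.length = m ++ q := by
  simpa using eraseIdx_append_add m (x :: q) 0

set_option maxRecDepth 8000 in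
theorem redF_iff_redI {w w' : List (Fin n)} : RedF w w' ↔ RedI w w' := by
  constructor
  · rintro ⟨p, m, q, x, h⟩
    have hw : w = p ++ x :: (m ++ x :: q) := by rcases h with ⟨_, h, _⟩ | ⟨_, h, _⟩ <;> exact h
    subst hw
    have hlen : (p ++ x :: (m ++ x :: q)).length = p.length + m.length + q.length + 2 := by
      simp [List.length_append]
      omega
    have h0 : ∀ (hh : p.length < (p ++ x :: (m ++ x :: q)).length),
        (p ++ x :: (m ++ x :: q))[p.length] = x := by
      intro hh
      rw [List.getElem_append_right (le_refl _)]
      simp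
    have h1 : ∀ (hh : p.length + m.length + 1 < (p ++ x :: (m ++ x :: q)).length),
        (p ++ x :: (m ++ x :: q))[p.length + m.length + 1] = x := by
      intro hh
      rw [List.getElem_append_right (by omega)]
      simp only [show p.length + m.length + 1 - p.length = m.length + 1 from by omega]
      rw [List.getElem_cons_succ]
      rw [List.getElem_append_right (le_refl _)]
      simp
    have h2 : ∀ (c : ℕ) (hc : c < (p ++ x :: (m ++ x :: q)).length), p.length < c →
        c < p.length + m.length + 1 → (p ++ x :: (m ++ x :: q))[c] ∈ m := by
      intro c hc hc1 hc2
      rw [List.getElem_append_right (by omega)]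
      obtain ⟨d, hd, hd2⟩ : ∃ d, c - p.length = d + 1 ∧ d < m.length :=
        ⟨c - p.length - 1, by omega, by omega⟩
      simp only [hd]
      rw [List.getElem_cons_succ]
      rw [List.getElem_append_left hd2]
      exact List.getElem_mem _
    have herase1 : (p ++ x :: (m ++ x :: q)).eraseIdx p.length = p ++ (m ++ x :: q) :=
      eraseIdx_append_len p x (m ++ x :: q)
    have herase2 : (p ++ x :: (m ++ x :: q)).eraseIdx (p.length + m.length + 1)
        = p ++ x :: (m ++ q) := by
      rw [show p.length + m.length + 1 = p.length + (m.length + 1) from by omega,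
        eraseIdx_append_add, List.eraseIdx_cons_succ, eraseIdx_append_len]
    rcases h with ⟨hm, -, hw'⟩ | ⟨hm, -, hw'⟩
    · refine ⟨p.length, by omega, ⟨p.length + m.length + 1, by omega, by omega,
        Or.inl ⟨by omega, ?_, ?_⟩⟩, by rw [hw', herase1]⟩
      · rw [h0 (by omega), h1 (by omega)]
      · intro c hc hc1 hc2
        rw [h0 (by omega)]
        exact hm _ (h2 c hc hc1 hc2)
    · refine ⟨p.length + m.length + 1, by omega, ⟨p.length, by omega, by omega,
        Or.inr ⟨by omega, ?_, ?_⟩⟩, by rw [hw', herase2]⟩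
      · rw [h0 (by omega), h1 (by omega)]
      · intro c hc hc1 hc2
        rw [h1 (by omega)]
        exact hm _ (h2 c hc hc1 hc2)
  · rintro ⟨k, hk, ⟨l, hl, hk', hcond⟩, rfl⟩
    rcases hcond with ⟨hkl, hEq, hbig⟩ | ⟨hlk, hEq, hsmall⟩
    · -- delete the earlier of the pair (k, l), letters between are bigger
      have hlenm : ((w.drop (k + 1)).take (l - (k + 1))).length = l - (k + 1) := by
        rw [List.length_take, List.length_drop]
        omega
      have hdrop : (w.drop (k + 1)).take (l - (k + 1)) ++ w[k] :: w.drop (l + 1)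
          = w.drop (k + 1) := by
        have h1 : List.drop (l - (k+1)) (w.drop (k+1)) = w.drop l := by
          rw [List.drop_drop]
          congr 1
          omega
        conv_rhs => rw [← List.take_append_drop (l - (k + 1)) (w.drop (k + 1))]
        rw [h1, List.drop_eq_getElem_cons hl, hEq]
      have hdec : w = w.take k ++ w[k] ::
          ((w.drop (k + 1)).take (l - (k + 1)) ++ w[k] :: w.drop (l + 1)) := by
        conv_lhs => rw [← List.take_append_drop k w, List.drop_eq_getElem_cons hk]
        rw [hdrop]
      have hmem : ∀ y ∈ (w.drop (k + 1)).take (l - (k + 1)), w[k] < y := by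
        intro y hy
        obtain ⟨j, hj, rfl⟩ := List.mem_iff_getElem.1 hy
        have hj' : j < l - (k + 1) := by omega
        have hval : ((w.drop (k + 1)).take (l - (k + 1)))[j] = w[k + 1 + j]'(by omega) := by
          rw [List.getElem_take, List.getElem_drop]
        rw [hval]
        exact hbig _ (by omega) (by omega) (by omega)
      have hktake : (w.take k).length = k := by
        rw [List.length_take]; omega
      refine ⟨w.take k, (w.drop (k + 1)).take (l - (k + 1)), w.drop (l + 1), w[k],
        Or.inl ⟨hmem, hdec, ?_⟩⟩
      conv_lhs => rw [hdec]
      have e1 := eraseIdx_append_len (w.take k) (w[k])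
        ((w.drop (k + 1)).take (l - (k + 1)) ++ w[k] :: w.drop (l + 1))
      rw [hktake] at e1
      exact e1
    · -- delete the later of the pair (l, k), letters between are smaller
      have hlenm : ((w.drop (l + 1)).take (k - (l + 1))).length = k - (l + 1) := by
        rw [List.length_take, List.length_drop]
        omega
      have hdrop : (w.drop (l + 1)).take (k - (l + 1)) ++ w[k] :: w.drop (k + 1)
          = w.drop (l + 1) := by
        have h1 : List.drop (k - (l+1)) (w.drop (l+1)) = w.drop k := by
          rw [List.drop_drop]
          congr 1
          omega
        conv_rhs => rw [← List.take_append_drop (k - (l + 1)) (w.drop (l + 1))]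
        rw [h1, List.drop_eq_getElem_cons hk]
      have hdec : w = w.take l ++ w[k] ::
          ((w.drop (l + 1)).take (k - (l + 1)) ++ w[k] :: w.drop (k + 1)) := by
        conv_lhs => rw [← List.take_append_drop l w, List.drop_eq_getElem_cons hl]
        rw [hEq, hdrop]
      have hmem : ∀ y ∈ (w.drop (l + 1)).take (k - (l + 1)), y < w[k] := by
        intro y hy
        obtain ⟨j, hj, rfl⟩ := List.mem_iff_getElem.1 hy
        have hj' : j < k - (l + 1) := by omega
        have hval : ((w.drop (l + 1)).take (k - (l + 1)))[j] = w[l + 1 + j]'(by omega) := by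
          rw [List.getElem_take, List.getElem_drop]
        rw [hval]
        exact hsmall _ (by omega) (by omega) (by omega)
      have hltake : (w.take l).length = l := by
        rw [List.length_take]; omega
      refine ⟨w.take l, (w.drop (l + 1)).take (k - (l + 1)), w.drop (k + 1), w[k],
        Or.inr ⟨hmem, hdec, ?_⟩⟩
      conv_lhs => rw [hdec]
      have e1 : (w.take l ++ w[k] :: ((w.drop (l + 1)).take (k - (l + 1)) ++ w[k] :: w.drop (k + 1))).eraseIdx
          ((w.take l).length + (((w.drop (l + 1)).take (k - (l + 1))).length + 1))
          = w.take l ++ w[k] :: ((w.drop (l + 1)).take (k - (l + 1)) ++ w.drop (k + 1)) := by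
        rw [eraseIdx_append_add, List.eraseIdx_cons_succ, eraseIdx_append_len]
      rw [hltake, hlenm] at e1
      rw [show l + (k - (l + 1) + 1) = k from by omega] at e1
      exact e1

theorem eraseIdx_comm' {α : Type*} : ∀ (w : List α) (k t : ℕ), k < t →
    (w.eraseIdx t).eraseIdx k = (w.eraseIdx k).eraseIdx (t - 1)
  | [], _, _, _ => by simp
  | a :: w', 0, t, h => by
      obtain ⟨t', rfl⟩ : ∃ t', t = t' + 1 := ⟨t - 1, by omega⟩
      simp
  | a :: w', k+1, t, h => by
      obtain ⟨t', rfl⟩ : ∃ t', t = t' + 1 := ⟨t - 1, by omega⟩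
      obtain ⟨t'', rfl⟩ : ∃ t'', t' = t'' + 1 := ⟨t' - 1, by omega⟩
      simp only [List.eraseIdx_cons_succ, Nat.add_sub_cancel]
      rw [eraseIdx_comm' w' k (t'' + 1) (by omega)]
      simp

theorem eraseIdx_adj {α : Type*} : ∀ (w : List α) (k : ℕ) (hk1 : k + 1 < w.length),
    w[k]'(by omega) = w[k+1]'hk1 → w.eraseIdx k = w.eraseIdx (k + 1)
  | a :: w', 0, h, he => by
      cases w' with
      | nil => simp at h
      | cons b w'' =>
          simp only [List.getElem_cons_zero, List.getElem_cons_succ] at he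
          simp [he]
  | a :: w', k+1, h, he => by
      simp only [List.eraseIdx_cons_succ]
      rw [eraseIdx_adj w' k (by simpa using h) (by simpa using he)]

theorem getE_lt {α : Type*} {w : List α} {t c : ℕ} (h : c < t) (hc : c < (w.eraseIdx t).length)
    (hcw : c < w.length) : (w.eraseIdx t)[c] = w[c] := by
  rw [List.getElem_eraseIdx, dif_pos h]

theorem getE_ge {α : Type*} {w : List α} {t c : ℕ} (h : ¬ c < t) (hc : c < (w.eraseIdx t).length)
    (hcw : c + 1 < w.length) : (w.eraseIdx t)[c] = w[c + 1] := by
  rw [List.getElem_eraseIdx, dif_neg h]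

set_option maxHeartbeats 1600000 in
theorem condA {w : List (Fin n)} {k t : ℕ} (hk : k < w.length) (ht : t < w.length)
    (hlt : k < t) (ck : Cond w k) (ct : Cond w t)
    (hdeg : ¬(t = k + 1 ∧ w[k] = w[t])) : Cond (w.eraseIdx t) k := by
  have hlen : (w.eraseIdx t).length = w.length - 1 := by
    rw [List.length_eraseIdx, if_pos ht]
  obtain ⟨l, hl, hk2, cond⟩ := ck
  rcases cond with ⟨hkl, heq, hbig⟩ | ⟨hlk, heq, hsmall⟩
  · rcases Nat.lt_trichotomy l t with hlt' | hlteq | hgt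
    · -- k < l < t
      refine ⟨l, by omega, by omega, Or.inl ⟨hkl, ?_, ?_⟩⟩
      · rw [getE_lt hlt' (by omega) hl, getE_lt (show k < t by omega) (by omega) hk]
        exact heq
      · intro c hc h1 h2
        rw [getE_lt (show c < t by omega) (by omega) (by omega),
          getE_lt (show k < t by omega) (by omega) hk]
        exact hbig c (by omega) h1 h2
    · -- l = t : use the condition at t
      subst hlteq
      obtain ⟨l₂, hl₂, hkk₂, cond₂⟩ := ct
      rcases cond₂ with ⟨htl₂, heq₂, hbig₂⟩ | ⟨hl₂t, heq₂, hsmall₂⟩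
      · -- l < l₂ : witness l₂ - 1
        obtain ⟨l₂', rfl⟩ : ∃ a, l₂ = a + 1 := ⟨l₂ - 1, by omega⟩
        refine ⟨l₂', by omega, by omega, Or.inl ⟨by omega, ?_, ?_⟩⟩
        · rw [getE_ge (show ¬ l₂' < l by omega) (by omega) (by omega),
            getE_lt (show k < l by omega) (by omega) hk]
          rw [heq₂]
          exact heq
        · intro c hc h1 h2
          by_cases hct : c < l
          · rw [getE_lt hct (by omega) (by omega), getE_lt (show k < l by omega) (by omega) hk]
            exact hbig c (by omega) h1 hct
          · rw [getE_ge hct (by omega) (by omega), getE_lt (show k < l by omega) (by omega) hk]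
            have h3 := hbig₂ (c+1) (by omega) (by omega) (by omega)
            rw [heq] at h3
            exact h3
      · -- l₂ < l : contradictions
        exfalso
        rcases Nat.lt_trichotomy l₂ k with h' | h' | h'
        · have h1 := hsmall₂ k (by omega) h' hlt
          rw [heq] at h1
          exact lt_irrefl _ h1
        · subst h'
          have hta : l = l₂ + 1 := by
            by_contra hne
            have b1 := hbig (l₂+1) (by omega) (by omega) (by omega)
            have b2 := hsmall₂ (l₂+1) (by omega) (by omega) (by omega)
            rw [heq] at b2
            exact absurd b2 (not_lt.2 b1.le)
          exact hdeg ⟨hta, heq.symm⟩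
        · have h1 := hbig l₂ (by omega) h' hl₂t
          rw [heq₂, heq] at h1
          exact lt_irrefl _ h1
    · -- t < l: witness l - 1
      obtain ⟨l', rfl⟩ : ∃ a, l = a + 1 := ⟨l - 1, by omega⟩
      refine ⟨l', by omega, by omega, Or.inl ⟨by omega, ?_, ?_⟩⟩
      · rw [getE_ge (show ¬ l' < t by omega) (by omega) (by omega),
          getE_lt (show k < t by omega) (by omega) hk]
        exact heq
      · intro c hc h1 h2
        by_cases hct : c < t
        · rw [getE_lt hct (by omega) (by omega), getE_lt (show k < t by omega) (by omega) hk]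
          exact hbig c (by omega) h1 (by omega)
        · rw [getE_ge hct (by omega) (by omega), getE_lt (show k < t by omega) (by omega) hk]
          exact hbig (c+1) (by omega) (by omega) (by omega)
  · -- l < k : untouched
    refine ⟨l, by omega, by omega, Or.inr ⟨hlk, ?_, ?_⟩⟩
    · rw [getE_lt (show l < t by omega) (by omega) hl, getE_lt (show k < t by omega) (by omega) hk]
      exact heq
    · intro c hc h1 h2
      rw [getE_lt (show c < t by omega) (by omega) (by omega),
        getE_lt (show k < t by omega) (by omega) hk]
      exact hsmall c (by omega) h1 h2

set_option maxHeartbeats 1600000 in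
theorem condB {w : List (Fin n)} {k t' : ℕ} (hk : k < w.length) (ht : t' + 1 < w.length)
    (hlt : k < t' + 1) (ck : Cond w k) (ct : Cond w (t' + 1))
    (hdeg : ¬(t' + 1 = k + 1 ∧ w[k] = w[t' + 1])) : Cond (w.eraseIdx k) t' := by
  have hlen : (w.eraseIdx k).length = w.length - 1 := by
    rw [List.length_eraseIdx, if_pos hk]
  have hkt' : k ≤ t' := by omega
  have hTget : (w.eraseIdx k)[t']'(by omega) = w[t' + 1]'ht :=
    getE_ge (by omega) (by omega) (by omega)
  obtain ⟨l₂, hl₂, hkk₂, cond₂⟩ := ct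
  rcases cond₂ with ⟨htl₂, heq₂, hbig₂⟩ | ⟨hl₂t, heq₂, hsmall₂⟩
  · -- t'+1 < l₂: witness l₂ - 1
    obtain ⟨l₂', rfl⟩ : ∃ a, l₂ = a + 1 := ⟨l₂ - 1, by omega⟩
    refine ⟨l₂', by omega, by omega, Or.inl ⟨by omega, ?_, ?_⟩⟩
    · rw [getE_ge (show ¬ l₂' < k by omega) (by omega) (by omega), hTget]
      exact heq₂
    · intro c hc h1 h2
      rw [getE_ge (show ¬ c < k by omega) (by omega) (by omega), hTget]
      exact hbig₂ (c+1) (by omega) (by omega) (by omega)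
  · -- l₂ < t'+1
    rcases Nat.lt_trichotomy k l₂ with h' | h' | h'
    · -- k < l₂ : witness l₂ - 1
      obtain ⟨l₂', rfl⟩ : ∃ a, l₂ = a + 1 := ⟨l₂ - 1, by omega⟩
      refine ⟨l₂', by omega, by omega, Or.inr ⟨by omega, ?_, ?_⟩⟩
      · rw [getE_ge (show ¬ l₂' < k by omega) (by omega) (by omega), hTget]
        exact heq₂
      · intro c hc h1 h2
        rw [getE_ge (show ¬ c < k by omega) (by omega) (by omega), hTget]
        exact hsmall₂ (c+1) (by omega) (by omega) (by omega)
    · -- k = l₂ : use the condition at k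
      subst h'
      obtain ⟨l₃, hl₃, hkk₃, cond₃⟩ := ck
      rcases cond₃ with ⟨hkl₃, heq₃, hbig₃⟩ | ⟨hl₃k, heq₃, hsmall₃⟩
      · exfalso
        rcases Nat.lt_trichotomy l₃ (t'+1) with h3 | h3 | h3
        · have b1 := hsmall₂ l₃ (by omega) hkl₃ h3
          rw [heq₃, ← heq₂] at b1
          exact lt_irrefl _ b1
        · have hta : t' + 1 = k + 1 := by
            by_contra hne
            have b1 := hbig₃ (k+1) (by omega) (by omega) (by omega)
            have b2 := hsmall₂ (k+1) (by omega) (by omega) (by omega)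
            exact absurd (b1.trans b2) heq₂.not_lt
          exact hdeg ⟨hta, heq₂⟩
        · have b1 := hbig₃ (t'+1) (by omega) (by omega) h3
          rw [← heq₂] at b1
          exact lt_irrefl _ b1
      · -- l₃ < k : witness l₃
        refine ⟨l₃, by omega, by omega, Or.inr ⟨by omega, ?_, ?_⟩⟩
        · rw [getE_lt (show l₃ < k by omega) (by omega) (by omega), hTget]
          rw [heq₃]
          exact heq₂
        · intro c hc h1 h2
          by_cases hck : c < k
          · rw [getE_lt hck (by omega) (by omega), hTget]
            have h4 := hsmall₃ c (by omega) h1 hck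
            rw [heq₂] at h4
            exact h4
          · rw [getE_ge hck (by omega) (by omega), hTget]
            exact hsmall₂ (c+1) (by omega) (by omega) (by omega)
    · -- l₂ < k : witness l₂
      refine ⟨l₂, by omega, by omega, Or.inr ⟨by omega, ?_, ?_⟩⟩
      · rw [getE_lt (show l₂ < k by omega) (by omega) (by omega), hTget]
        exact heq₂
      · intro c hc h1 h2
        by_cases hck : c < k
        · rw [getE_lt hck (by omega) (by omega), hTget]
          exact hsmall₂ c (by omega) h1 (by omega)
        · rw [getE_ge hck (by omega) (by omega), hTget]
          exact hsmall₂ (c+1) (by omega) (by omega) (by omega)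

theorem diamond_main {w : List (Fin n)} {k t : ℕ} (hk : k < w.length) (ht : t < w.length)
    (ck : Cond w k) (ct : Cond w t) (hlt : k < t) :
    w.eraseIdx k = w.eraseIdx t ∨ ∃ z, RedI (w.eraseIdx k) z ∧ RedI (w.eraseIdx t) z := by
  by_cases hdeg : t = k + 1 ∧ w[k] = w[t]
  · left
    obtain ⟨rfl, he⟩ := hdeg
    exact eraseIdx_adj w k ht he
  · right
    obtain ⟨t', rfl⟩ : ∃ a, t = a + 1 := ⟨t - 1, by omega⟩
    have hlen1 : (w.eraseIdx k).length = w.length - 1 := by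
      rw [List.length_eraseIdx, if_pos hk]
    have hlen2 : (w.eraseIdx (t' + 1)).length = w.length - 1 := by
      rw [List.length_eraseIdx, if_pos ht]
    refine ⟨(w.eraseIdx k).eraseIdx t', ⟨t', by omega, condB hk ht hlt ck ct hdeg, rfl⟩,
      ⟨k, by omega, condA hk ht hlt ck ct hdeg, ?_⟩⟩
    simpa using (eraseIdx_comm' w k (t' + 1) hlt).symm

theorem diamond {w u v : List (Fin n)} (hu : RedI w u) (hv : RedI w v) :
    u = v ∨ ∃ z, RedI u z ∧ RedI v z := by
  obtain ⟨k, hk, ck, rfl⟩ := hu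
  obtain ⟨t, ht, ct, rfl⟩ := hv
  rcases Nat.lt_trichotomy k t with h | rfl | h
  · exact diamond_main hk ht ck ct h
  · exact Or.inl rfl
  · rcases diamond_main ht hk ct ck h with h' | ⟨z, h1, h2⟩
    · exact Or.inl h'.symm
    · exact Or.inr ⟨z, h2, h1⟩

/-- Normal form predicate. -/
def NFw (w : List (Fin n)) : Prop := ∀ w', ¬ RedF w w'

theorem exists_nf (w : List (Fin n)) :
    ∃ u, Relation.ReflTransGen RedF w u ∧ NFw u := by
  have H : ∀ (N : ℕ) (w : List (Fin n)), w.length = N →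
      ∃ u, Relation.ReflTransGen RedF w u ∧ NFw u := by
    intro N
    induction N using Nat.strong_induction_on with
    | _ N ih =>
      intro w hN
      by_cases h : ∃ w', RedF w w'
      · obtain ⟨w', hw'⟩ := h
        obtain ⟨u, hu1, hu2⟩ := ih w'.length (by rw [← hN, ← hw'.len]; omega) w' rfl
        exact ⟨u, Relation.ReflTransGen.head hw' hu1, hu2⟩
      · exact ⟨w, Relation.ReflTransGen.refl, fun w' hw' => h ⟨w', hw'⟩⟩
  exact H w.length w rfl

theorem rtg_sublist {w u : List (Fin n)} (h : Relation.ReflTransGen RedF w u) :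
    u.Sublist w := by
  induction h with
  | refl => exact List.Sublist.refl _
  | tail _ h2 ih => exact h2.sublist.trans ih

theorem rtg_append_left (a : List (Fin n)) {u v : List (Fin n)}
    (h : Relation.ReflTransGen RedF u v) :
    Relation.ReflTransGen RedF (a ++ u) (a ++ v) := by
  induction h with
  | refl => exact Relation.ReflTransGen.refl
  | tail _ h2 ih => exact ih.tail (h2.append_left a)

theorem rtg_append_right {u v : List (Fin n)} (h : Relation.ReflTransGen RedF u v)
    (b : List (Fin n)) :
    Relation.ReflTransGen RedF (u ++ b) (v ++ b) := by
  induction h with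
  | refl => exact Relation.ReflTransGen.refl
  | tail _ h2 ih => exact ih.tail (h2.append_right b)

theorem strong_conf : ∀ (a b c : List (Fin n)), RedF a b → RedF a c →
    ∃ d, Relation.ReflGen RedF b d ∧ Relation.ReflTransGen RedF c d := by
  intro a b c hab hac
  rcases diamond (redF_iff_redI.1 hab) (redF_iff_redI.1 hac) with heq | ⟨z, h1, h2⟩
  · exact ⟨c, heq ▸ Relation.ReflGen.refl, Relation.ReflTransGen.refl⟩
  · exact ⟨z, Relation.ReflGen.single (redF_iff_redI.2 h1),
      Relation.ReflTransGen.single (redF_iff_redI.2 h2)⟩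

theorem nf_unique {w u v : List (Fin n)} (hu : Relation.ReflTransGen RedF w u) (h2 : NFw u)
    (hv : Relation.ReflTransGen RedF w v) (h4 : NFw v) : u = v := by
  obtain ⟨z, huz, hvz⟩ := Relation.church_rosser strong_conf hu hv
  have e1 : u = z := by
    rcases huz.cases_head with h | ⟨c, hc, -⟩
    · exact h
    · exact absurd hc (h2 c)
  have e2 : v = z := by
    rcases hvz.cases_head with h | ⟨c, hc, -⟩
    · exact h
    · exact absurd hc (h4 c)
  rw [e1, e2]

/-- The normal form of a word. -/
noncomputable def nf (w : List (Fin n)) : List (Fin n) := (exists_nf w).choose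

theorem nf_rtg (w : List (Fin n)) : Relation.ReflTransGen RedF w (nf w) :=
  (exists_nf w).choose_spec.1

theorem nf_nf (w : List (Fin n)) : NFw (nf w) := (exists_nf w).choose_spec.2

theorem nf_eq_of {w u : List (Fin n)} (h : Relation.ReflTransGen RedF w u) : nf w = nf u :=
  nf_unique (nf_rtg w) (nf_nf w) (h.trans (nf_rtg u)) (nf_nf u)

theorem nf_fix {w : List (Fin n)} (h : NFw w) : nf w = w :=
  nf_unique (nf_rtg w) (nf_nf w) Relation.ReflTransGen.refl h

/-- The congruence "equal normal forms". -/
def redCon (n : ℕ) : Con (FreeMonoid (Fin n)) :=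
  { r := fun a b => nf (FreeMonoid.toList a) = nf (FreeMonoid.toList b)
    iseqv := ⟨fun _ => rfl, Eq.symm, Eq.trans⟩
    mul' := fun {a b c d} h1 h2 => by
      show nf (FreeMonoid.toList (a * c)) = nf (FreeMonoid.toList (b * d))
      have key : ∀ (x y : List (Fin n)), nf (x ++ y) = nf (nf x ++ nf y) := fun x y =>
        nf_eq_of ((rtg_append_right (nf_rtg x) y).trans (rtg_append_left (nf x) (nf_rtg y)))
      rw [FreeMonoid.toList_mul, FreeMonoid.toList_mul, key, h1, h2, ← key] }

theorem conGen_le_redCon : conGen (Rel n) ≤ redCon n := by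
  apply Con.conGen_le.2
  rintro x y (⟨i, rfl, rfl⟩ | ⟨i, j, hji, (⟨rfl, rfl⟩ | ⟨rfl, rfl⟩)⟩)
  · have step : RedF (n := n) [i, i] [i] :=
      ⟨[], [], [], i, Or.inr ⟨by simp, by simp, by simp⟩⟩
    show nf _ = nf _
    simpa [FreeMonoid.toList_mul, FreeMonoid.toList_of] using
      nf_eq_of (Relation.ReflTransGen.single step)
  · have step : RedF (n := n) [i, j, i] [i, j] :=
      ⟨[], [j], [], i, Or.inr ⟨by simpa using hji, by simp, by simp⟩⟩
    show nf _ = nf _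
    simpa [FreeMonoid.toList_mul, FreeMonoid.toList_of] using
      nf_eq_of (Relation.ReflTransGen.single step)
  · have step : RedF (n := n) [j, i, j] [i, j] :=
      ⟨[], [i], [], j, Or.inl ⟨by simpa using hji, by simp, by simp⟩⟩
    show nf _ = nf _
    simpa [FreeMonoid.toList_mul, FreeMonoid.toList_of] using
      nf_eq_of (Relation.ReflTransGen.single step)

end Rewrite

/-- If `v` is canonical and `φ(v) = φ(w)`, then `v` is a quasi-subword
(i.e. a not-necessarily-contiguous subsequence) of `w`. -/
theorem canonical_sublist (n : ℕ) (hn : 1 ≤ n) (v w : List (Fin n))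
    (hv : Canonical v) (h : phiL n v = phiL n w) : v.Sublist w := by
  have hker : Con.ker (Con.mk' (conGen (Rel n))) (.ofList v) (.ofList w) :=
    (Con.ker_rel _).2 h
  rw [Con.mk'_ker] at hker
  have hcon := conGen_le_redCon hker
  have hnf : nf v = nf w := by
    simpa [FreeMonoid.toList_ofList] using
      (show nf (FreeMonoid.toList (FreeMonoid.ofList v)) = nf (FreeMonoid.toList (FreeMonoid.ofList w)) from hcon)
  have hNF : NFw v := by
    intro v' hred
    rcases hred with ⟨p, m, q, x, ⟨hm, hw1, -⟩ | ⟨hm, hw1, -⟩⟩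
    · obtain ⟨-, ⟨k2, hk2, hk2'⟩⟩ := hv p m q x (by rw [hw1]; simp)
      exact absurd hk2' (not_lt.2 (hm _ hk2).le)
    · obtain ⟨⟨j2, hj2, hj2'⟩, -⟩ := hv p m q x (by rw [hw1]; simp)
      exact absurd hj2' (not_lt.2 (hm _ hj2).le)
  have hvfix : v = nf v := (nf_fix hNF).symm
  rw [hvfix, hnf]
  exact rtg_sublist (nf_rtg w)

end Kiselman
end
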